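/- For every n ≥ 2 and every k ≥ 0, the number of 2-arrangements a of [n−1] whose permutation form avoids the pattern 321 and satisfies des(a) = k equals the number of 321-avoiding permutations of [n] having exactly k peaks. -/

import Mathlib

/-!
Let `T` be the set of fixed points of `a = (π, φ)` coloured `¬1`, and `t = #T`. Send `a` to the
permutation `σ` of `[n]` with `σ(1) = t + 1`, whose later entries list `1, …, t` from left to
right at the positions of `T` and, at a position `i ∉ T`, `t + 1 +` the rank of `π(i)` in
`[n - 1] ∖ T`. The word `σ(2) ⋯ σ(n)` has the same inversions as `pf₂(a)`, because the letters `¬1`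
are all equal and smaller than every positive letter. The entries below `σ(1)` increase, so
`σ` contains `321` iff `σ(2) ⋯ σ(n)` does, iff `pf₂(a)` does; and the descents of `σ(2) ⋯ σ(n)`
are exactly the peaks of `σ` when `σ` avoids `321`. Conversely, in a `321`-avoiding permutation
the entries below `σ(1)` do increase, which is what is needed to invert the construction.
-/

open scoped Classical

namespace KArr

/-- Positive reduction of a word over ℤ: each positive letter is replaced by its
rank among the distinct positive letters of the word; negative letters unchanged. -/
def posReduce (w : List ℤ) : List ℤ :=
  w.map fun x => if 0 < x then ((w.toFinset.filter fun y => 0 < y ∧ y ≤ x).card : ℤ) else x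

/-- The set of descents of a word (1-indexed: `i` is a descent iff `w_i > w_{i+1}`). -/
def desSet (w : List ℤ) : Finset ℕ :=
  (Finset.range w.length).filter fun i => 1 ≤ i ∧ w.getD i 0 < w.getD (i - 1) 0

/-- The number of descents of a word. -/
def desNum (w : List ℤ) : ℕ := (desSet w).card

/-- The subword of positive letters. -/
def posPart (w : List ℤ) : List ℤ := w.filter fun x => decide (0 < x)

/-- A `k`-arrangement of `[n]`: a permutation together with a color in `Fin k`
attached to each fixed point (encoded as a total coloring that is `0` off the
fixed points). -/
abbrev Arrangement (n k : ℕ) :=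
  {x : Equiv.Perm (Fin n) × (Fin n → Fin k) // ∀ j, x.1 j ≠ j → (x.2 j : ℕ) = 0}

/-- The derangement form of a `k`-arrangement: replace each fixed point by the
negative letter recording its color, then positively reduce.  (Color `c : Fin k`
encodes the letter `¬(c+1) = -(c+1)`.) -/
def dfWord {n k : ℕ} (a : Arrangement n k) : List ℤ :=
  posReduce <| (List.finRange n).map fun i =>
    if a.1.1 i = i then -(((a.1.2 i : ℕ) : ℤ) + 1) else ((a.1.1 i : ℕ) : ℤ) + 1

/-- The permutation form of a `k`-arrangement: replace each fixed point whose
color is not `¬k` by the corresponding negative letter, then positively reduce. -/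
def pfWord {n k : ℕ} (a : Arrangement n k) : List ℤ :=
  posReduce <| (List.finRange n).map fun i =>
    if a.1.1 i = i ∧ (a.1.2 i : ℕ) + 1 ≠ k then -(((a.1.2 i : ℕ) : ℤ) + 1)
    else ((a.1.1 i : ℕ) : ℤ) + 1

/-- `fix_i(a)`: the number of fixed points of the base permutation with color `c`. -/
noncomputable def fixCount {n k : ℕ} (a : Arrangement n k) (c : Fin k) : ℕ :=
  Nat.card {i : Fin n // a.1.1 i = i ∧ a.1.2 i = c}

/-- `DEZ(a)`, the descent set of the derangement form. -/
def DEZset {n k : ℕ} (a : Arrangement n k) : Finset ℕ := desSet (dfWord a)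

/-- `DES(a)`, the descent set of the permutation form. -/
def DESset {n k : ℕ} (a : Arrangement n k) : Finset ℕ := desSet (pfWord a)

/-- `dez(a)`, the number of descents of the derangement form. -/
def dez {n k : ℕ} (a : Arrangement n k) : ℕ := desNum (dfWord a)

/-- `des(a)`, the number of descents of the permutation form. -/
def des {n k : ℕ} (a : Arrangement n k) : ℕ := desNum (pfWord a)

/-- `Der(a)`, the derangement part: the positive subword of the derangement form. -/
def Der {n k : ℕ} (a : Arrangement n k) : List ℤ := posPart (dfWord a)

/-- One-line notation of a permutation of `[n]`, as a word over `ℤ` with letters `1,…,n`. -/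
def oneLine {n : ℕ} (π : Equiv.Perm (Fin n)) : List ℤ :=
  (List.finRange n).map fun i => ((π i : ℕ) : ℤ) + 1

/-- A word `w` contains the pattern `p` if some subsequence of `w` of the same
length as `p` is order-isomorphic to `p` (entrywise strict inequalities match). -/
def Contains (w p : List ℤ) : Prop :=
  ∃ s : List ℤ, s.Sublist w ∧ s.length = p.length ∧
    ∀ i j, i < p.length → j < p.length →
      (s.getD i 0 < s.getD j 0 ↔ p.getD i 0 < p.getD j 0)

/-- A word avoids a pattern if it does not contain it. -/
def Avoids (w p : List ℤ) : Prop := ¬ Contains w p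


/-- `dez`-word of a permutation: replace each fixed point by `¬1 = -1`,
then positively reduce (the `1`-arrangement derangement form). -/
def dzWordPerm {n : ℕ} (π : Equiv.Perm (Fin n)) : List ℤ :=
  posReduce <| (List.finRange n).map fun i =>
    if π i = i then (-1 : ℤ) else ((π i : ℕ) : ℤ) + 1

/-- The weak derangement part `Der_k(a)`: the derangement form with all letters `¬k` removed. -/
def wDer {n k : ℕ} (a : Arrangement n k) : List ℤ :=
  (dfWord a).filter fun x => decide (x ≠ -(k : ℤ))

/-- For a word `w` which is a derangement form, position `j` (0-indexed) of `w` is an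
excedance of the base permutation iff the letter is positive and exceeds the number
of positive letters among the first `j+1` letters. -/
def isExcAt (w : List ℤ) (j : ℕ) : Prop :=
  ((((w.take (j + 1)).filter fun x => decide (0 < x)).length : ℤ)) < w.getD j 0

/-- `e_i = E` for the (1-indexed) letter positions `0 ≤ i ≤ m+1` of `w`, with the
boundary conventions `e_0 = e_{m+1} = E`. -/
def slotE (w : List ℤ) (i : ℕ) : Prop :=
  i = 0 ∨ i = w.length + 1 ∨ isExcAt w (i - 1)

/-- `w_i > w_{i+1}` (1-indexed letters) with the conventions `w_0 = w_{m+1} = +∞`;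
this is the descent condition attached to slot `i`, `0 ≤ i ≤ m`. -/
def slotGt (w : List ℤ) (i : ℕ) : Prop :=
  i = 0 ∨ (i < w.length ∧ w.getD i 0 < w.getD (i - 1) 0)

/-- Slot `i` is of type I: `w_i > w_{i+1}` and `(e_i, e_{i+1}) = (E, N)`. -/
def typeI (w : List ℤ) (i : ℕ) : Prop := slotGt w i ∧ slotE w i ∧ ¬ slotE w (i + 1)

/-- Slot `i` is of type II: `w_i ≤ w_{i+1}` and `(e_i, e_{i+1}) = (N, E)`. -/
def typeII (w : List ℤ) (i : ℕ) : Prop := ¬ slotGt w i ∧ ¬ slotE w i ∧ slotE w (i + 1)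

/-- Slot `i` is of type III: `w_i ≤ w_{i+1}` and `(e_i, e_{i+1}) ≠ (N, E)`. -/
def typeIII (w : List ℤ) (i : ℕ) : Prop := ¬ slotGt w i ∧ ¬ (¬ slotE w i ∧ slotE w (i + 1))

/-- Slot `i` is of type IV: `w_i > w_{i+1}` and `(e_i, e_{i+1}) ≠ (E, N)`. -/
def typeIV (w : List ℤ) (i : ℕ) : Prop := slotGt w i ∧ ¬ (slotE w i ∧ ¬ slotE w (i + 1))

/-- The length `s_i` of the `i`-th slot of the word `u` (a derangement form),
where the slot letters are the letters equal to `c` (`= ¬k`). -/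
def slotLen (u : List ℤ) (c : ℤ) (i : ℕ) : ℕ :=
  let L := (List.range u.length).filter fun j => decide (u.getD j 0 ≠ c)
  (if i < L.length then L.getD i 0 else u.length) - (if i = 0 then 0 else L.getD (i - 1) 0 + 1)

/-- The number of peaks of a word: indices `i` (1-indexed, `2 ≤ i ≤ n-1`)
with `w_{i-1} < w_i > w_{i+1}`. -/
def peakNum (w : List ℤ) : ℕ :=
  ((List.range w.length).filter fun i => decide (0 < i ∧ i + 1 < w.length ∧
    w.getD (i - 1) 0 < w.getD i 0 ∧ w.getD (i + 1) 0 < w.getD i 0)).length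

/-- Number of fixed points of a permutation. -/
noncomputable def fixNum {n : ℕ} (π : Equiv.Perm (Fin n)) : ℕ :=
  Nat.card {i : Fin n // π i = i}

/-- Number of excedances of a permutation. -/
noncomputable def excNum {n : ℕ} (π : Equiv.Perm (Fin n)) : ℕ :=
  Nat.card {i : Fin n // i < π i}

/-- Number of anti-excedances of a permutation. -/
noncomputable def aexcNum {n : ℕ} (π : Equiv.Perm (Fin n)) : ℕ :=
  Nat.card {i : Fin n // π i < i}

/-- `ldes` of a word: the smallest `i` which is a descent or equals the length
(0 for the empty word). -/
def ldesW (w : List ℤ) : ℕ :=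
  (((List.range (w.length + 1)).filter fun i =>
    decide ((1 ≤ i ∧ i < w.length ∧ w.getD i 0 < w.getD (i - 1) 0) ∨ i = w.length))).headD 0

/-- `rdes` of a word: the length minus the position of the rightmost descent
(`sSup ∅ = 0` when there is no descent). -/
def rdesW (w : List ℤ) : ℕ :=
  w.length - ((List.range w.length).filter fun i =>
    decide (1 ≤ i ∧ w.getD i 0 < w.getD (i - 1) 0)).foldr max 0

/-- Number of crossing descents of a permutation: (1-indexed) descents `i` with
`σ(i) ≥ i+1 ≥ σ(i+1)`. -/
def xdesW (w : List ℤ) : ℕ :=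
  ((List.range w.length).filter fun i : ℕ =>
    decide (1 ≤ i ∧ (i : ℤ) + 1 ≤ w.getD (i - 1) 0 ∧ w.getD i 0 ≤ (i : ℤ) + 1)).length

/-- Number of crossing descents of a permutation. -/
def xdesNum {n : ℕ} (σ : Equiv.Perm (Fin n)) : ℕ := xdesW (oneLine σ)

/-- A height sequence `d` encodes a Dyck path: it is weakly increasing and `d_i ≤ i - 1`
(1-indexed), i.e. `d.getD i 0 ≤ i` (0-indexed). -/
def IsDyck (d : List ℕ) : Prop :=
  List.Pairwise (· ≤ ·) d ∧ ∀ i < d.length, d.getD i 0 ≤ i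

/-- Number of hills of a Dyck path: east steps of height equal to their index that
touch the diagonal and are immediately followed by a north step. -/
def hillNum (d : List ℕ) : ℕ :=
  ((List.range d.length).filter fun i => decide (d.getD i 0 = i ∧
    (i + 1 = d.length ∨ d.getD i 0 < d.getD (i + 1) 0))).length

/-- Number of segments of a Dyck path: maximal runs of at least two consecutive
equal heights (counted by their starting index). -/
def segNum (d : List ℕ) : ℕ :=
  ((List.range d.length).filter fun i => decide (i + 1 < d.length ∧
    d.getD i 0 = d.getD (i + 1) 0 ∧ (i = 0 ∨ d.getD (i - 1) 0 ≠ d.getD i 0))).length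

/-- `lseg`: the (1-indexed) position of the last step of the leftmost segment,
or `n+1` if there is no segment. -/
def lsegNum (d : List ℕ) : ℕ :=
  (((List.range (d.length + 2)).filter fun i =>
    decide ((2 ≤ i ∧ i ≤ d.length ∧ d.getD (i - 2) 0 = d.getD (i - 1) 0 ∧
      (i = d.length ∨ d.getD (i - 1) 0 ≠ d.getD i 0)) ∨ i = d.length + 1))).headD 0

/-- Dyck paths of semilength `n`, encoded as monotone functions `Fin n → Fin (n+1)`
bounded by the diagonal (their height sequences). -/
def DyckFinset (n : ℕ) : Finset (Fin n → Fin (n + 1)) :=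
  Finset.univ.filter fun f =>
    (∀ i j : Fin n, i ≤ j → f i ≤ f j) ∧ ∀ i : Fin n, (f i : ℕ) ≤ (i : ℕ)

/-- The height sequence of a function `Fin n → Fin (n+1)` as a list. -/
def hList {n : ℕ} (f : Fin n → Fin (n + 1)) : List ℕ :=
  (List.finRange n).map fun i => (f i : ℕ)


lemma getD_map_finRange {m : ℕ} (f : Fin m → ℤ) {i : ℕ} (hi : i < m) :
    ((List.finRange m).map f).getD i 0 = f ⟨i, hi⟩ := by
  rw [List.getD_eq_getElem _ _ (by simpa using hi), List.getElem_map, List.getElem_finRange]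
  rfl

lemma getD_inj_of_nodup {w : List ℤ} (hw : w.Nodup) {i j : ℕ} (hi : i < w.length)
    (hj : j < w.length) (h : w.getD i 0 = w.getD j 0) : i = j := by
  rwa [List.getD_eq_getElem _ _ hi, List.getD_eq_getElem _ _ hj, hw.getElem_inj_iff] at h

lemma contains_321_iff (w : List ℤ) :
    Contains w [3, 2, 1] ↔ ∃ i j l : ℕ, i < j ∧ j < l ∧ l < w.length ∧
      w.getD l 0 < w.getD j 0 ∧ w.getD j 0 < w.getD i 0 := by
  constructor
  · rintro ⟨s, hsub, hlen, hord⟩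
    obtain ⟨f, hf⟩ := List.sublist_iff_exists_fin_orderEmbedding_get_eq.mp hsub
    have hs : s.length = 3 := by simpa using hlen
    have hget (r : ℕ) (hr : r < 3) : s.getD r 0 = w.getD (f ⟨r, by omega⟩) 0 := by
      rw [List.getD_eq_getElem _ _ (by omega), List.getD_eq_getElem _ _ (f _).2]
      exact hf ⟨r, by omega⟩
    have h10 := (hord 1 0 (by simp) (by simp)).mpr (by decide)
    have h21 := (hord 2 1 (by simp) (by simp)).mpr (by decide)
    rw [hget 0 (by omega), hget 1 (by omega)] at h10
    rw [hget 1 (by omega), hget 2 (by omega)] at h21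
    exact ⟨_, _, _, f.strictMono (Fin.mk_lt_mk.mpr zero_lt_one),
      f.strictMono (Fin.mk_lt_mk.mpr one_lt_two), (f _).2, h21, h10⟩
  · rintro ⟨i, j, l, hij, hjl, hl, hlj, hji⟩
    refine ⟨[w.getD i 0, w.getD j 0, w.getD l 0], ?_, rfl, ?_⟩
    · rw [List.sublist_iff_exists_fin_orderEmbedding_get_eq]
      let g : Fin 3 → Fin w.length := ![⟨i, by omega⟩, ⟨j, by omega⟩, ⟨l, hl⟩]
      have hg : StrictMono g := by
        intro x y hxy
        fin_cases x <;> fin_cases y <;> simp_all [g, Fin.lt_def]; omega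
      refine ⟨OrderEmbedding.ofStrictMono g hg, fun x => ?_⟩
      fin_cases x <;> simp [g, show i < w.length by omega,
        show j < w.length by omega, hl]
    · intro x y hx hy
      simp only [List.length_cons, List.length_nil] at hx hy
      generalize w.getD i 0 = A at *
      generalize w.getD j 0 = B at *
      generalize w.getD l 0 = C at *
      interval_cases x <;> interval_cases y <;> simp [List.getD] <;> omega

lemma contains_321_cons_iff (x : ℤ) (w : List ℤ) :
    Contains (x :: w) [3, 2, 1] ↔ Contains w [3, 2, 1] ∨
      ∃ j l : ℕ, j < l ∧ l < w.length ∧ w.getD l 0 < w.getD j 0 ∧ w.getD j 0 < x := by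
  rw [contains_321_iff, contains_321_iff]
  constructor
  · rintro ⟨i, j, l, hij, hjl, hl, hlj, hji⟩
    obtain ⟨j, rfl⟩ : ∃ j', j = j' + 1 := ⟨j - 1, by omega⟩
    obtain ⟨l, rfl⟩ : ∃ l', l = l' + 1 := ⟨l - 1, by omega⟩
    rcases i with _ | i
    · exact Or.inr ⟨j, l, by omega, by simpa using hl, hlj, hji⟩
    · exact Or.inl ⟨i, j, l, by omega, by omega, by simpa using hl, hlj, hji⟩
  · rintro (⟨i, j, l, hij, hjl, hl, hlj, hji⟩ | ⟨j, l, hjl, hl, hlj, hjx⟩)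
    · exact ⟨i + 1, j + 1, l + 1, by omega, by omega, by simpa using hl, hlj, hji⟩
    · exact ⟨0, j + 1, l + 1, by omega, by omega, by simpa using hl, hlj, hjx⟩

def SameInversions (v w : List ℤ) : Prop :=
  v.length = w.length ∧ ∀ i j : ℕ, i < j → j < w.length →
    (v.getD j 0 < v.getD i 0 ↔ w.getD j 0 < w.getD i 0)

namespace SameInversions

variable {v w : List ℤ}

lemma desSet_eq (h : SameInversions v w) : desSet v = desSet w := by
  ext i
  simp only [desSet, Finset.mem_filter, Finset.mem_range, h.1]
  constructor
  · rintro ⟨hi, h1, hlt⟩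
    exact ⟨hi, h1, (h.2 (i - 1) i (by omega) hi).mp hlt⟩
  · rintro ⟨hi, h1, hlt⟩
    exact ⟨hi, h1, (h.2 (i - 1) i (by omega) hi).mpr hlt⟩

lemma contains_321_iff (h : SameInversions v w) :
    Contains v [3, 2, 1] ↔ Contains w [3, 2, 1] := by
  rw [KArr.contains_321_iff, KArr.contains_321_iff, h.1]
  constructor
  · rintro ⟨i, j, l, hij, hjl, hl, hlj, hji⟩
    exact ⟨i, j, l, hij, hjl, hl, (h.2 j l hjl hl).mp hlj, (h.2 i j hij (by omega)).mp hji⟩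
  · rintro ⟨i, j, l, hij, hjl, hl, hlj, hji⟩
    exact ⟨i, j, l, hij, hjl, hl, (h.2 j l hjl hl).mpr hlj, (h.2 i j hij (by omega)).mpr hji⟩

end SameInversions

lemma sameInversions_map_finRange {m : ℕ} {f g : Fin m → ℤ}
    (h : ∀ i j, i < j → (f j < f i ↔ g j < g i)) :
    SameInversions ((List.finRange m).map f) ((List.finRange m).map g) := by
  refine ⟨by simp, fun i j hij hj => ?_⟩
  simp only [List.length_map, List.length_finRange] at hj
  rw [getD_map_finRange f hj, getD_map_finRange f (hij.trans hj), getD_map_finRange g hj,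
    getD_map_finRange g (hij.trans hj)]
  exact h _ _ (Fin.mk_lt_mk.mpr hij)

def posRank (w : List ℤ) (x : ℤ) : ℤ :=
  if 0 < x then ((w.toFinset.filter fun y => 0 < y ∧ y ≤ x).card : ℤ) else x

lemma strictMonoOn_posRank (w : List ℤ) : StrictMonoOn (posRank w) {x | x ∈ w} := by
  intro x _ y hy hxy
  have hyy (hy0 : 0 < y) : y ∈ w.toFinset.filter fun z => 0 < z ∧ z ≤ y := by simp_all
  unfold posRank
  split_ifs with hx0 hy0 hy0
  · refine Nat.cast_lt.mpr (Finset.card_lt_card ⟨?_, fun hsub => ?_⟩)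
    · exact Finset.monotone_filter_right _ fun z _ hz => ⟨hz.1, hz.2.trans hxy.le⟩
    · have := (Finset.mem_filter.mp (hsub (hyy hy0))).2.2
      omega
  · omega
  · have : 0 < (w.toFinset.filter fun z => 0 < z ∧ z ≤ y).card :=
      Finset.card_pos.mpr ⟨y, hyy hy0⟩
    omega
  · exact hxy

lemma sameInversions_posReduce (w : List ℤ) : SameInversions (posReduce w) w := by
  have hget {i : ℕ} (hi : i < w.length) : (posReduce w).getD i 0 = posRank w (w.getD i 0) := by
    rw [posReduce, List.getD_eq_getElem _ _ (by simpa using hi), List.getElem_map,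
      List.getD_eq_getElem _ _ hi, posRank]
  have hmem {i : ℕ} (hi : i < w.length) : w.getD i 0 ∈ w := by
    rw [List.getD_eq_getElem _ _ hi]; exact List.getElem_mem _
  refine ⟨by simp [posReduce], fun i j hij hj => ?_⟩
  rw [hget hj, hget (hij.trans hj)]
  exact (strictMonoOn_posRank w).lt_iff_lt (hmem hj) (hmem (hij.trans hj))

lemma length_filter_range (N : ℕ) (p : ℕ → Prop) [DecidablePred p] :
    ((List.range N).filter fun i => decide (p i)).length = ((Finset.range N).filter p).card :=
  rfl

lemma peakNum_eq_desNum_tail {w : List ℤ} (hw : w.Nodup) (h : Avoids w [3, 2, 1]) :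
    peakNum w = desNum w.tail := by
  rw [peakNum, length_filter_range, desNum, desSet]
  congr 1
  ext i
  have htail (r : ℕ) : w.tail.getD r 0 = w.getD (r + 1) 0 := by simp
  simp only [Finset.mem_filter, Finset.mem_range, List.length_tail, htail]
  constructor
  · rintro ⟨-, hi0, hi, -, hdes⟩
    exact ⟨by omega, hi0, by rwa [Nat.sub_add_cancel hi0]⟩
  · rintro ⟨hi, hi0, hdes⟩
    rw [Nat.sub_add_cancel hi0] at hdes
    refine ⟨by omega, hi0, by omega, lt_of_le_of_ne (not_lt.mp fun hasc => h ?_) ?_, hdes⟩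
    · exact (contains_321_iff w).mpr
        ⟨i - 1, i, i + 1, by omega, by omega, by omega, hdes, hasc⟩
    · exact fun he => absurd (getD_inj_of_nodup hw (by omega) (by omega) he) (by omega)

section Rank

variable {α : Type*} [LinearOrder α] {s : Finset α} {x y : α}

/-- The number of elements of `s` below `x`, when `x ∈ s`. -/
def rank (s : Finset α) (x : α) : ℕ := s.sort.idxOf x

lemma rank_eq_orderIsoOfFin_symm (hx : x ∈ s) :
    rank s x = ((s.orderIsoOfFin rfl).symm ⟨x, hx⟩ : ℕ) :=
  rfl

lemma rank_lt_card (hx : x ∈ s) : rank s x < s.card := by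
  rw [rank_eq_orderIsoOfFin_symm hx]
  exact Fin.isLt _

lemma rank_lt_rank_iff (hx : x ∈ s) (hy : y ∈ s) : rank s x < rank s y ↔ x < y := by
  rw [rank_eq_orderIsoOfFin_symm hx, rank_eq_orderIsoOfFin_symm hy, ← Fin.lt_def,
    OrderIso.lt_iff_lt, Subtype.mk_lt_mk]

lemma rank_inj (hx : x ∈ s) (hy : y ∈ s) : rank s x = rank s y ↔ x = y := by
  rw [rank_eq_orderIsoOfFin_symm hx, rank_eq_orderIsoOfFin_symm hy, ← Fin.ext_iff,
    EmbeddingLike.apply_eq_iff_eq, Subtype.mk.injEq]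

lemma getD_sort_rank (hx : x ∈ s) (d : α) : s.sort.getD (rank s x) d = x := by
  rw [rank, List.getD_eq_getElem _ _ (List.idxOf_lt_length_of_mem ((s.mem_sort _).mpr hx))]
  exact List.getElem_idxOf _

lemma getD_sort_mem {k : ℕ} (hk : k < s.card) (d : α) : s.sort.getD k d ∈ s := by
  rw [List.getD_eq_getElem _ _ (by simpa using hk), ← s.mem_sort (· ≤ ·)]
  exact List.getElem_mem _

lemma rank_getD_sort {k : ℕ} (hk : k < s.card) (d : α) : rank s (s.sort.getD k d) = k := by
  rw [List.getD_eq_getElem _ _ (by simpa using hk)]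
  exact (s.sort_nodup _).idxOf_getElem k _

lemma rank_eq_of_strictMonoOn {f : α → ℕ} (hf : StrictMonoOn f s)
    (hlt : ∀ x ∈ s, f x < s.card) (hx : x ∈ s) : rank s x = f x := by
  let g : Fin s.card → Fin s.card := fun r =>
    ⟨f (s.sort.getD r x), hlt _ (getD_sort_mem r.2 x)⟩
  have hg : StrictMono g := fun r r' hrr' => by
    refine hf (getD_sort_mem r.2 x) (getD_sort_mem r'.2 x) ?_
    rwa [← rank_lt_rank_iff (getD_sort_mem r.2 x) (getD_sort_mem r'.2 x), rank_getD_sort r.2,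
      rank_getD_sort r'.2]
  have hfix : f (s.sort.getD (rank s x) x) = rank s x :=
    congrArg Fin.val (hg.apply_eq (x := ⟨rank s x, rank_lt_card hx⟩))
  rw [getD_sort_rank hx] at hfix
  exact hfix.symm

end Rank

section Perm

variable {m : ℕ} (σ : Equiv.Perm (Fin (m + 1)))

lemma oneLine_eq_cons :
    oneLine σ =
      (((σ 0 : ℕ) : ℤ) + 1) :: (List.finRange m).map fun i => ((σ i.succ : ℕ) : ℤ) + 1 := by
  simp [oneLine, List.finRange_succ]

lemma oneLine_nodup {N : ℕ} (τ : Equiv.Perm (Fin N)) : (oneLine τ).Nodup :=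
  (List.nodup_finRange N).map fun i j h => τ.injective (Fin.ext (by simpa using h))

def lowPos : Finset (Fin m) := Finset.univ.filter fun i => σ i.succ < σ 0

lemma card_lowPos : (lowPos σ).card = σ 0 := by
  rw [lowPos, ← Fin.card_Iio (σ 0)]
  have h0 := Fin.card_filter_univ_succ fun x => σ x < σ 0
  rw [if_neg (lt_irrefl _)] at h0
  rw [← h0]
  exact Finset.card_equiv σ fun x => by simp

def LowIncreasing : Prop := StrictMonoOn (fun i : Fin m => σ i.succ) (lowPos σ)

variable {σ}

lemma LowIncreasing.contains_321_iff (h : LowIncreasing σ) :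
    Contains (oneLine σ) [3, 2, 1] ↔ Contains (oneLine σ).tail [3, 2, 1] := by
  rw [oneLine_eq_cons, contains_321_cons_iff, List.tail_cons, or_iff_left]
  rintro ⟨j, l, hjl, hl, hlj, hj0⟩
  simp only [List.length_map, List.length_finRange] at hl
  rw [getD_map_finRange _ hl, getD_map_finRange _ (hjl.trans hl)] at hlj
  rw [getD_map_finRange _ (hjl.trans hl)] at hj0
  have hmem (r : Fin m) (hr : ((σ r.succ : ℕ) : ℤ) < σ 0) : r ∈ lowPos σ := by
    simp only [lowPos, Finset.mem_filter, Finset.mem_univ, true_and, Fin.lt_def]; omega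
  have := Fin.lt_def.mp (h (hmem _ (by omega)) (hmem _ (by omega)) (Fin.mk_lt_mk.mpr hjl))
  dsimp only at this
  omega

lemma lowIncreasing_of_avoids (h : Avoids (oneLine σ) [3, 2, 1]) : LowIncreasing σ := by
  intro i hi j hj hij
  simp only [lowPos, Finset.coe_filter, Finset.mem_univ, true_and, Set.mem_ofPred_eq] at hi hj
  by_contra hle
  have hlt : σ j.succ < σ i.succ := lt_of_le_of_ne (not_lt.mp hle)
    fun he => hij.ne (Fin.succ_injective _ (σ.injective he)).symm
  refine h ((oneLine_eq_cons σ ▸ contains_321_cons_iff _ _).mpr (Or.inr ⟨i, j, hij, ?_⟩))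
  simp only [List.length_map, List.length_finRange, getD_map_finRange _ i.2,
    getD_map_finRange _ j.2, Fin.eta]
  rw [Fin.lt_def] at hi hlt
  omega

end Perm

section Arrangement

variable {m : ℕ} (a : Arrangement m 2)

/-- The positions of the letters `¬1` in `pfWord a`. -/
def negPos : Finset (Fin m) := Finset.univ.filter fun i => a.1.1 i = i ∧ a.1.2 i = 0

variable {a}

lemma mem_negPos {i : Fin m} : i ∈ negPos a ↔ a.1.1 i = i ∧ a.1.2 i = 0 := by
  simp [negPos]

lemma apply_notMem_negPos {i : Fin m} (hi : i ∉ negPos a) : a.1.1 i ∉ negPos a := by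
  rw [mem_negPos] at hi ⊢
  rintro ⟨hfix, hcol⟩
  rw [a.1.1.injective hfix] at hcol
  exact hi ⟨a.1.1.injective hfix, hcol⟩

lemma card_negPos_le : (negPos a).card ≤ m := by
  simpa using Finset.card_le_univ (negPos a)

variable (a)

lemma pfWord_eq : pfWord a = posReduce ((List.finRange m).map fun i =>
    if i ∈ negPos a then -1 else ((a.1.1 i : ℕ) : ℤ) + 1) := by
  refine congrArg posReduce (List.map_congr_left fun i _ => ?_)
  have hcol : (a.1.2 i : ℕ) + 1 ≠ 2 ↔ a.1.2 i = 0 := by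
    rw [Fin.ext_iff]; have := (a.1.2 i).isLt; simp only [Fin.val_zero]; omega
  by_cases h : a.1.1 i = i ∧ a.1.2 i = 0 <;> simp [hcol, mem_negPos, h]

def toPermFun : Fin (m + 1) → Fin (m + 1) :=
  Fin.cases ⟨(negPos a).card, Nat.lt_succ_of_le card_negPos_le⟩ fun i =>
    if hi : i ∈ negPos a then
      ⟨rank (negPos a) i, (rank_lt_card hi).trans_le (card_negPos_le.trans m.le_succ)⟩
    else
      ⟨(negPos a).card + 1 + rank (negPos a)ᶜ (a.1.1 i), by
        have := rank_lt_card (Finset.mem_compl.mpr (apply_notMem_negPos hi))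
        rw [Finset.card_compl, Fintype.card_fin] at this
        have := card_negPos_le (a := a)
        omega⟩

variable {a}

lemma toPermFun_zero : (toPermFun a 0 : ℕ) = (negPos a).card := rfl

lemma toPermFun_succ_of_mem {i : Fin m} (hi : i ∈ negPos a) :
    (toPermFun a i.succ : ℕ) = rank (negPos a) i := by
  simp [toPermFun, hi]

lemma toPermFun_succ_of_notMem {i : Fin m} (hi : i ∉ negPos a) :
    (toPermFun a i.succ : ℕ) = (negPos a).card + 1 + rank (negPos a)ᶜ (a.1.1 i) := by
  simp [toPermFun, hi]

lemma toPermFun_succ_lt_iff {i : Fin m} :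
    (toPermFun a i.succ : ℕ) < (negPos a).card ↔ i ∈ negPos a := by
  by_cases hi : i ∈ negPos a
  · simpa [toPermFun_succ_of_mem hi, hi] using rank_lt_card hi
  · rw [toPermFun_succ_of_notMem hi]
    exact iff_of_false (by omega) hi

lemma toPermFun_succ_ne_card (i : Fin m) : (toPermFun a i.succ : ℕ) ≠ (negPos a).card := by
  by_cases hi : i ∈ negPos a
  · exact (toPermFun_succ_lt_iff.mpr hi).ne
  · rw [toPermFun_succ_of_notMem hi]; omega

lemma toPermFun_injective : Function.Injective (toPermFun a) := by
  intro x y hxy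
  replace hxy := congrArg Fin.val hxy
  induction x using Fin.cases <;> induction y using Fin.cases
  · rfl
  · exact absurd hxy.symm (toPermFun_succ_ne_card _)
  · exact absurd hxy (toPermFun_succ_ne_card _)
  case succ.succ i j =>
    congr 1
    by_cases hi : i ∈ negPos a <;> by_cases hj : j ∈ negPos a
    · rwa [toPermFun_succ_of_mem hi, toPermFun_succ_of_mem hj, rank_inj hi hj] at hxy
    · have := toPermFun_succ_lt_iff.mpr hi; have := toPermFun_succ_lt_iff.not.mpr hj; omega
    · have := toPermFun_succ_lt_iff.not.mpr hi; have := toPermFun_succ_lt_iff.mpr hj; omega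
    · rw [toPermFun_succ_of_notMem hi, toPermFun_succ_of_notMem hj, Nat.add_left_cancel_iff,
        rank_inj (Finset.mem_compl.mpr (apply_notMem_negPos hi))
          (Finset.mem_compl.mpr (apply_notMem_negPos hj))] at hxy
      exact a.1.1.injective hxy

variable (a)

noncomputable def toPerm : Equiv.Perm (Fin (m + 1)) :=
  Equiv.ofBijective (toPermFun a) (Finite.injective_iff_bijective.mp toPermFun_injective)

lemma toPerm_apply (x : Fin (m + 1)) : toPerm a x = toPermFun a x := rfl

lemma lowPos_toPerm : lowPos (toPerm a) = negPos a := by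
  ext i
  simp only [lowPos, Finset.mem_filter, Finset.mem_univ, true_and, Fin.lt_def]
  exact toPermFun_succ_lt_iff

lemma lowIncreasing_toPerm : LowIncreasing (toPerm a) := by
  intro i hi j hj hij
  rw [lowPos_toPerm] at hi hj
  simp only [Fin.lt_def, toPerm_apply]
  rw [toPermFun_succ_of_mem hi, toPermFun_succ_of_mem hj]
  exact (rank_lt_rank_iff hi hj).mpr hij

lemma sameInversions_toPerm : SameInversions
    ((List.finRange m).map fun i => if i ∈ negPos a then -1 else ((a.1.1 i : ℕ) : ℤ) + 1)
    (oneLine (toPerm a)).tail := by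
  rw [oneLine_eq_cons, List.tail_cons]
  refine sameInversions_map_finRange fun i j hij => ?_
  change _ ↔ ((toPermFun a j.succ : ℕ) : ℤ) + 1 < ((toPermFun a i.succ : ℕ) : ℤ) + 1
  by_cases hi : i ∈ negPos a <;> by_cases hj : j ∈ negPos a <;>
    simp only [hi, hj, if_true, if_false]
  · rw [toPermFun_succ_of_mem hi, toPermFun_succ_of_mem hj]
    have := (rank_lt_rank_iff hj hi).not.mpr (not_lt.mpr hij.le)
    omega
  · have := toPermFun_succ_lt_iff.mpr hi; have := toPermFun_succ_lt_iff.not.mpr hj; omega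
  · have := toPermFun_succ_lt_iff.not.mpr hi; have := toPermFun_succ_lt_iff.mpr hj; omega
  · rw [toPermFun_succ_of_notMem hi, toPermFun_succ_of_notMem hj]
    have := rank_lt_rank_iff (Finset.mem_compl.mpr (apply_notMem_negPos hj))
      (Finset.mem_compl.mpr (apply_notMem_negPos hi))
    rw [Fin.lt_def] at this
    omega

lemma avoids_pfWord_iff :
    Avoids (pfWord a) [3, 2, 1] ↔ Avoids (oneLine (toPerm a)) [3, 2, 1] := by
  rw [Avoids, Avoids, pfWord_eq, (sameInversions_posReduce _).contains_321_iff,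
    (sameInversions_toPerm a).contains_321_iff, (lowIncreasing_toPerm a).contains_321_iff]

lemma des_eq_peakNum (h : Avoids (oneLine (toPerm a)) [3, 2, 1]) :
    des a = peakNum (oneLine (toPerm a)) := by
  rw [peakNum_eq_desNum_tail (oneLine_nodup _) h, des, desNum, desNum, pfWord_eq,
    (sameInversions_posReduce _).desSet_eq, (sameInversions_toPerm a).desSet_eq]

end Arrangement

section Inverse

variable {m : ℕ} (σ : Equiv.Perm (Fin (m + 1)))

lemma lt_apply_succ_of_notMem_lowPos {i : Fin m} (hi : i ∉ lowPos σ) :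
    (σ 0 : ℕ) < σ i.succ := by
  simp only [lowPos, Finset.mem_filter, Finset.mem_univ, true_and, not_lt] at hi
  exact lt_of_le_of_ne hi fun he => Fin.succ_ne_zero i (σ.injective (Fin.ext he)).symm

lemma apply_succ_sub_lt_card_compl {i : Fin m} (hi : i ∉ lowPos σ) :
    (σ i.succ : ℕ) - σ 0 - 1 < (lowPos σ)ᶜ.card := by
  rw [Finset.card_compl, Fintype.card_fin, card_lowPos]
  have := lt_apply_succ_of_notMem_lowPos σ hi
  have := (σ i.succ).isLt
  omega

def ofPermFun (i : Fin m) : Fin m :=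
  if i ∈ lowPos σ then i else (lowPos σ)ᶜ.sort.getD ((σ i.succ : ℕ) - σ 0 - 1) i

variable {σ}

lemma ofPermFun_of_mem {i : Fin m} (hi : i ∈ lowPos σ) : ofPermFun σ i = i := if_pos hi

lemma ofPermFun_mem_compl {i : Fin m} (hi : i ∉ lowPos σ) :
    ofPermFun σ i ∈ (lowPos σ)ᶜ := by
  rw [ofPermFun, if_neg hi]
  exact getD_sort_mem (apply_succ_sub_lt_card_compl σ hi) i

lemma rank_ofPermFun {i : Fin m} (hi : i ∉ lowPos σ) :
    rank (lowPos σ)ᶜ (ofPermFun σ i) = (σ i.succ : ℕ) - σ 0 - 1 := by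
  rw [ofPermFun, if_neg hi]
  exact rank_getD_sort (apply_succ_sub_lt_card_compl σ hi) i

lemma ofPermFun_injective : Function.Injective (ofPermFun σ) := by
  intro i j hij
  by_cases hi : i ∈ lowPos σ <;> by_cases hj : j ∈ lowPos σ
  · rwa [ofPermFun_of_mem hi, ofPermFun_of_mem hj] at hij
  · have := ofPermFun_mem_compl hj
    rw [← hij, ofPermFun_of_mem hi] at this
    exact absurd hi (Finset.mem_compl.mp this)
  · have := ofPermFun_mem_compl hi
    rw [hij, ofPermFun_of_mem hj] at this
    exact absurd hj (Finset.mem_compl.mp this)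
  · have hrank := congrArg (rank (lowPos σ)ᶜ) hij
    rw [rank_ofPermFun hi, rank_ofPermFun hj] at hrank
    have := lt_apply_succ_of_notMem_lowPos σ hi
    have := lt_apply_succ_of_notMem_lowPos σ hj
    exact Fin.succ_injective _ (σ.injective (Fin.ext (by omega)))

variable (σ)

noncomputable def ofPerm : Arrangement m 2 :=
  ⟨(Equiv.ofBijective (ofPermFun σ) (Finite.injective_iff_bijective.mp ofPermFun_injective),
    fun i => if ofPermFun σ i = i ∧ i ∉ lowPos σ then 1 else 0),
    fun _ hj => by simp only [Equiv.ofBijective_apply] at hj; simp [hj]⟩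

lemma ofPerm_apply (i : Fin m) : (ofPerm σ).1.1 i = ofPermFun σ i := rfl

lemma negPos_ofPerm : negPos (ofPerm σ) = lowPos σ := by
  ext i
  simp only [mem_negPos, ofPerm, Equiv.ofBijective_apply]
  by_cases hi : i ∈ lowPos σ <;> simp [hi, ofPermFun_of_mem]

lemma ofPerm_toPerm (a : Arrangement m 2) : ofPerm (toPerm a) = a := by
  have hπ (i : Fin m) : ofPermFun (toPerm a) i = a.1.1 i := by
    rw [ofPermFun, lowPos_toPerm]
    split_ifs with hi
    · exact (mem_negPos.mp hi).1.symm
    · change (negPos a)ᶜ.sort.getD ((toPermFun a i.succ : ℕ) - toPermFun a 0 - 1) i = _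
      have hcancel (t r : ℕ) : t + 1 + r - t - 1 = r := by omega
      rw [toPermFun_succ_of_notMem hi, toPermFun_zero, hcancel]
      exact getD_sort_rank (Finset.mem_compl.mpr (apply_notMem_negPos hi)) i
  refine Subtype.ext (Prod.ext (Equiv.ext hπ) (funext fun i => ?_))
  change (if ofPermFun (toPerm a) i = i ∧ i ∉ lowPos (toPerm a) then 1 else 0) = a.1.2 i
  rw [hπ, lowPos_toPerm]
  by_cases hfix : a.1.1 i = i
  · by_cases hi : i ∈ negPos a
    · simp [hi, (mem_negPos.mp hi).2]
    · have : a.1.2 i ≠ 0 := fun h0 => hi (mem_negPos.mpr ⟨hfix, h0⟩)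
      simp only [hfix, hi, not_false_eq_true, and_self, if_true]
      omega
  · simp only [hfix, false_and, if_false]
    exact (Fin.ext (a.2 i hfix)).symm

lemma toPerm_ofPerm (h : LowIncreasing σ) : toPerm (ofPerm σ) = σ := by
  refine Equiv.ext fun x => Fin.ext ?_
  change (toPermFun (ofPerm σ) x : ℕ) = σ x
  induction x using Fin.cases with
  | zero => rw [toPermFun_zero, negPos_ofPerm, card_lowPos]
  | succ i =>
    by_cases hi : i ∈ lowPos σ
    · rw [toPermFun_succ_of_mem (negPos_ofPerm σ ▸ hi), negPos_ofPerm]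
      refine rank_eq_of_strictMonoOn (f := fun i => (σ i.succ : ℕ))
        (fun j hj k hk hjk => h hj hk hjk) (fun j hj => ?_) hi
      rw [card_lowPos, ← Fin.lt_def]
      exact (Finset.mem_filter.mp hj).2
    · rw [toPermFun_succ_of_notMem (negPos_ofPerm σ ▸ hi)]
      simp only [negPos_ofPerm, card_lowPos]
      rw [ofPerm_apply, rank_ofPermFun hi]
      have := lt_apply_succ_of_notMem_lowPos σ hi
      omega

end Inverse

theorem stmt12 (n k : ℕ) (hn : 2 ≤ n) :
    Nat.card {a : Arrangement (n - 1) 2 // Avoids (pfWord a) [3, 2, 1] ∧ des a = k} =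
    Nat.card {π : Equiv.Perm (Fin n) //
      Avoids (oneLine π) [3, 2, 1] ∧ peakNum (oneLine π) = k} := by
  obtain ⟨m, rfl⟩ : ∃ m, n = m + 1 := ⟨n - 1, by omega⟩
  have hofPerm {σ : Equiv.Perm (Fin (m + 1))} (hσ : Avoids (oneLine σ) [3, 2, 1]) :
      toPerm (ofPerm σ) = σ :=
    toPerm_ofPerm σ (lowIncreasing_of_avoids hσ)
  refine Nat.card_congr
    { toFun := fun a => ⟨toPerm a.1, (avoids_pfWord_iff a.1).mp a.2.1,
        des_eq_peakNum a.1 ((avoids_pfWord_iff a.1).mp a.2.1) ▸ a.2.2⟩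
      invFun := fun σ =>
        ⟨ofPerm σ.1, by rw [avoids_pfWord_iff, hofPerm σ.2.1]; exact σ.2.1, ?_⟩
      left_inv := fun a => Subtype.ext (ofPerm_toPerm a.1)
      right_inv := fun σ => Subtype.ext (hofPerm σ.2.1) }
  rw [des_eq_peakNum _ ((hofPerm σ.2.1).symm ▸ σ.2.1), hofPerm σ.2.1]
  exact σ.2.2

end KArr
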